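/- arXiv:1903.11631 — 5 statements merged into one kernel-verified Lean document; each statement's English description precedes it below -/
import Mathlib

section
/- Let x ∈ [0,1] have base-r expansion x = Σ_{n≥1} ε_n r^{-n} with digits ε_n ∈ {0,…,r-1}. If x ∉ D ∪ D̃ (i.e., the digit sequence is not eventually 0, eventually r-1, nor eventually (r-1)/2), then for each n the function g_n is differentiable at x with g'_n(x) ∈ {-1, 1}; moreover g'_n(x) = 1 if ε_n < (r-1)/2 and g'_n(x) = -1 if ε_n > (r-1)/2. -/
open Set Filter MeasureTheory Metric Topology

/-- Distance from `x` to the nearest integer. -/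
noncomputable def phiTW (x : ℝ) : ℝ := Metric.infDist x (Set.range (Int.cast : ℤ → ℝ))

/-- The Takagi–Van der Waerden function `f_r`. -/
noncomputable def fTW (r : ℕ) (x : ℝ) : ℝ :=
  ∑' n : ℕ, (1 / (r : ℝ) ^ n) * phiTW ((r : ℝ) ^ n * x)

/-- `D_n = { k / r^(n-1) : k ∈ ℤ } ∩ [0,1]` (intended for `n ≥ 1`). -/
def DTW (r n : ℕ) : Set ℝ :=
  {y : ℝ | ∃ k : ℤ, y = (k : ℝ) / (r : ℝ) ^ (n - 1)} ∩ Set.Icc 0 1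

/-- `g_n(x) = dist(x, D_n)`. -/
noncomputable def gTW (r n : ℕ) (x : ℝ) : ℝ := Metric.infDist x (DTW r n)

/-- `D̃_n`: midpoints of consecutive points of `D_n`. -/
def DtTW (r n : ℕ) : Set ℝ :=
  {y : ℝ | ∃ k : ℤ, y = (2 * (k : ℝ) + 1) / (2 * (r : ℝ) ^ (n - 1))} ∩ Set.Icc 0 1

/-- `D = ⋃_{n ≥ 1} D_n`. -/
def DTWall (r : ℕ) : Set ℝ := ⋃ n ≥ 1, DTW r n

/-- `D̃ = ⋃_{n ≥ 1} D̃_n`. -/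
def DtTWall (r : ℕ) : Set ℝ := ⋃ n ≥ 1, DtTW r n

/-!
Write `t` for the tail `0.ε_n ε_{n+1} …` in base `r`, so that `r^(n-1) x = K + t` with `K`
a natural number below `r^(n-1)`. The excluded digit patterns give `0 < t < 1`, and `t ≠ 1/2`:
a tail equal to `1/2` makes every later tail `1/2` and every later digit `(r-1)/2`. Since `D_n`
is the grid of mesh `r^(1-n)` in `[0,1]`, near `x` the function `g_n` is `|y - c|` for the grid
point `c ∈ {K/r^(n-1), (K+1)/r^(n-1)}` nearest to `x`, so its slope is `1` if `t < 1/2` and `-1`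
if `t > 1/2`; which of the two happens is decided by the digit `ε_n = ⌊r t⌋`.
-/

namespace Real

variable {b : ℕ}

theorem ofDigits_pos {a : ℕ → Fin b} {i : ℕ} (hi : (a i : ℕ) ≠ 0) : 0 < ofDigits a := by
  refine summable_ofDigitsTerm.tsum_pos (fun _ => ofDigitsTerm_nonneg) i ?_
  have hb : 0 < b := Fin.pos (a 0)
  have hai : (0 : ℝ) < (a i : ℕ) := by exact_mod_cast Nat.pos_of_ne_zero hi
  unfold ofDigitsTerm
  positivity

theorem ofDigits_lt_one (hb : 1 < b) {a : ℕ → Fin b} {i : ℕ} (hi : (a i : ℕ) ≠ b - 1) :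
    ofDigits a < 1 := by
  rw [← ofDigits_const_last_eq_one' hb]
  refine summable_ofDigitsTerm.tsum_lt_tsum (i := i) (fun j => ?_) ?_ summable_ofDigitsTerm
  · unfold ofDigitsTerm
    gcongr
    exact Nat.le_sub_one_of_lt (a j).isLt
  · unfold ofDigitsTerm
    gcongr
    exact lt_of_le_of_ne (Nat.le_sub_one_of_lt (a i).isLt) hi

theorem ofDigits_shift_eq (a : ℕ → Fin b) (p : ℕ) :
    ofDigits (fun i => a (i + p)) =
      ((a p : ℕ) + ofDigits (fun i => a (i + (p + 1)))) / b := by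
  rw [ofDigits_eq_sum_add_ofDigits _ 1]
  simp only [Finset.range_one, ofDigitsTerm, Finset.sum_singleton, zero_add, pow_one, add_assoc,
    add_comm 1 p]
  ring

theorem exists_pow_mul_ofDigits_shift_eq (a : ℕ → Fin b) {p q : ℕ} (hpq : p ≤ q) :
    ∃ K : ℕ, K < b ^ (q - p) ∧
      (b : ℝ) ^ (q - p) * ofDigits (fun i => a (i + p)) = K + ofDigits (fun i => a (i + q)) := by
  induction q, hpq using Nat.le_induction with
  | base => exact ⟨0, by simp, by simp⟩
  | succ q hpq ih =>
    obtain ⟨K, hK, hKa⟩ := ih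
    have hb : 0 < b := Fin.pos (a 0)
    refine ⟨b * K + a q, ?_, ?_⟩
    · calc b * K + a q < b * (K + 1) := by linarith [(a q).isLt]
        _ ≤ b * b ^ (q - p) := Nat.mul_le_mul_left b hK
        _ = b ^ (q + 1 - p) := by rw [Nat.sub_add_comm hpq, pow_succ']
    · rw [Nat.sub_add_comm hpq, pow_succ', mul_assoc, hKa, ofDigits_shift_eq a q]
      push_cast
      field_simp
      ring

theorem ofDigits_shift_eq_half {a : ℕ → Fin b} {p : ℕ}
    (hpos : 0 < ofDigits (fun i => a (i + (p + 1))))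
    (hlt : ofDigits (fun i => a (i + (p + 1))) < 1)
    (h : ofDigits (fun i => a (i + p)) = 1 / 2) :
    2 * (a p : ℕ) + 1 = b ∧ ofDigits (fun i => a (i + (p + 1))) = 1 / 2 := by
  have hb : (0 : ℝ) < b := by exact_mod_cast Fin.pos (a 0)
  rw [ofDigits_shift_eq, div_eq_iff hb.ne'] at h
  have hdigit : 2 * (a p : ℕ) + 1 = b := by
    have h₁ : 2 * (a p : ℕ) < b := by exact_mod_cast (by linarith : 2 * ((a p : ℕ) : ℝ) < b)
    have h₂ : b < 2 * (a p : ℕ) + 2 := by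
      exact_mod_cast (by linarith : (b : ℝ) < 2 * ((a p : ℕ) : ℝ) + 2)
    omega
  refine ⟨hdigit, ?_⟩
  have : (b : ℝ) = 2 * ((a p : ℕ) : ℝ) + 1 := by exact_mod_cast hdigit.symm
  linarith

theorem two_mul_digit_add_one_eq_of_ofDigits_shift_eq_half {a : ℕ → Fin b}
    (hpos : ∀ p, 0 < ofDigits (fun i => a (i + p)))
    (hlt : ∀ p, ofDigits (fun i => a (i + p)) < 1) {q : ℕ}
    (h : ofDigits (fun i => a (i + q)) = 1 / 2) {i : ℕ} (hi : q ≤ i) :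
    2 * (a i : ℕ) + 1 = b := by
  have hhalf : ∀ j, ofDigits (fun i => a (i + (q + j))) = 1 / 2 := by
    intro j
    induction j with
    | zero => exact h
    | succ j ih => exact (ofDigits_shift_eq_half (hpos _) (hlt _) ih).2
  obtain ⟨j, rfl⟩ := Nat.exists_eq_add_of_le hi
  exact (ofDigits_shift_eq_half (hpos _) (hlt _) (hhalf j)).1

theorem ofDigits_shift_lt_half {a : ℕ → Fin b} {p : ℕ}
    (hlt : ofDigits (fun i => a (i + (p + 1))) < 1) (hp : ((a p : ℕ) : ℝ) < (b - 1) / 2) :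
    ofDigits (fun i => a (i + p)) < 1 / 2 := by
  have hb : (0 : ℝ) < b := by exact_mod_cast Fin.pos (a 0)
  have hdigit : 2 * (a p : ℕ) + 2 ≤ b := by
    have : 2 * (a p : ℕ) + 1 < b := by
      exact_mod_cast (by linarith : 2 * ((a p : ℕ) : ℝ) + 1 < b)
    omega
  have : 2 * ((a p : ℕ) : ℝ) + 2 ≤ b := by exact_mod_cast hdigit
  rw [ofDigits_shift_eq, div_lt_iff₀ hb]
  linarith

theorem half_lt_ofDigits_shift {a : ℕ → Fin b} {p : ℕ}
    (hpos : 0 < ofDigits (fun i => a (i + (p + 1)))) (hp : (b - 1) / 2 < ((a p : ℕ) : ℝ)) :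
    1 / 2 < ofDigits (fun i => a (i + p)) := by
  have hb : (0 : ℝ) < b := by exact_mod_cast Fin.pos (a 0)
  have hdigit : b ≤ 2 * (a p : ℕ) := by
    have : b < 2 * (a p : ℕ) + 1 := by
      exact_mod_cast (by linarith : (b : ℝ) < 2 * ((a p : ℕ) : ℝ) + 1)
    omega
  have : (b : ℝ) ≤ 2 * ((a p : ℕ) : ℝ) := by exact_mod_cast hdigit
  rw [ofDigits_shift_eq, lt_div_iff₀ hb]
  linarith

end Real

theorem Metric.infDist_eq_dist_of_isolated {α : Type*} [PseudoMetricSpace α] {s : Set α}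
    {c y : α} {δ : ℝ} (hc : c ∈ s) (hsep : ∀ z ∈ s, z ≠ c → 2 * δ ≤ dist z c)
    (hy : dist y c ≤ δ) : infDist y s = dist y c := by
  refine le_antisymm (infDist_le_dist_of_mem hc) ((le_infDist ⟨c, hc⟩).2 fun z hz => ?_)
  rcases eq_or_ne z c with rfl | hzc
  · exact le_rfl
  · linarith [hsep z hz hzc, dist_triangle z y c, dist_comm y z]

theorem hasDerivAt_infDist_of_isolated {s : Set ℝ} {c x δ : ℝ} (hc : c ∈ s)
    (hsep : ∀ z ∈ s, z ≠ c → 2 * δ ≤ dist z c) (hxc : x ≠ c) (hx : dist x c < δ) :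
    HasDerivAt (infDist · s) (SignType.sign (x - c)) x := by
  have hloc : (fun y => |y - c|) =ᶠ[𝓝 x] (infDist · s) := by
    filter_upwards [isOpen_ball.mem_nhds (mem_ball.2 hx)] with y hy
    rw [infDist_eq_dist_of_isolated hc hsep (mem_ball.1 hy).le, Real.dist_eq]
  exact ((hasDerivAt_abs (sub_ne_zero.2 hxc)).comp x
    ((hasDerivAt_id x).sub_const c)).congr_of_eventuallyEq hloc.symm |>.congr_deriv (by simp)

section Grid

variable {r n : ℕ}

theorem natCast_div_mem_DTW (hr : 0 < r) {k : ℕ} (hk : k ≤ r ^ (n - 1)) :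
    (k : ℝ) / (r : ℝ) ^ (n - 1) ∈ DTW r n := by
  refine ⟨⟨k, by push_cast; rfl⟩, by positivity, ?_⟩
  rw [div_le_one (by positivity)]
  exact_mod_cast hk

theorem inv_pow_le_dist_of_mem_DTW (hr : 0 < r) {z c : ℝ} (hz : z ∈ DTW r n) (hc : c ∈ DTW r n)
    (hzc : z ≠ c) : ((r : ℝ) ^ (n - 1))⁻¹ ≤ dist z c := by
  obtain ⟨⟨j, rfl⟩, -⟩ := hz
  obtain ⟨⟨k, rfl⟩, -⟩ := hc
  have hm : (0 : ℝ) < (r : ℝ) ^ (n - 1) := by positivity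
  have hjk : (1 : ℝ) ≤ |(j : ℝ) - k| := by
    exact_mod_cast Int.one_le_abs (sub_ne_zero.2 fun h => hzc (by rw [h]))
  rw [Real.dist_eq, ← sub_div, abs_div, abs_of_pos hm, inv_eq_one_div]
  gcongr

theorem hasDerivAt_gTW (hr : 0 < r) {k : ℕ} (hk : k ≤ r ^ (n - 1)) {x s : ℝ}
    (hx : (r : ℝ) ^ (n - 1) * x - k = s) (hs₀ : s ≠ 0) (hs : |s| < 1 / 2) :
    HasDerivAt (gTW r n) (SignType.sign s) x := by
  set m : ℝ := (r : ℝ) ^ (n - 1)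
  have hm : 0 < m := by positivity
  have hxk : x - k / m = s / m := by rw [← hx]; field_simp
  have hderiv := hasDerivAt_infDist_of_isolated (δ := 1 / (2 * m)) (natCast_div_mem_DTW hr hk)
    (fun z hz hzk => by
      rw [show 2 * (1 / (2 * m)) = m⁻¹ by field_simp]
      exact inv_pow_le_dist_of_mem_DTW hr hz (natCast_div_mem_DTW hr hk) hzk)
    (by rw [← sub_ne_zero, hxk]; exact div_ne_zero hs₀ hm.ne')
    (by
      rw [Real.dist_eq, hxk, abs_div, abs_of_pos hm, div_lt_div_iff₀ hm (by positivity)]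
      nlinarith)
  rwa [hxk, div_eq_mul_inv, sign_mul, sign_pos (inv_pos.2 hm), SignType.coe_mul,
    SignType.coe_one, mul_one] at hderiv

theorem hasDerivAt_gTW_of_lt_half (hr : 0 < r) {K : ℕ} (hK : K ≤ r ^ (n - 1)) {x t : ℝ}
    (hx : (r : ℝ) ^ (n - 1) * x = K + t) (ht₀ : 0 < t) (ht : t < 1 / 2) :
    HasDerivAt (gTW r n) 1 x := by
  have h := hasDerivAt_gTW hr hK (by rw [hx]; ring) ht₀.ne' (by rwa [abs_of_pos ht₀])
  rwa [sign_pos ht₀, SignType.coe_one] at h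

theorem hasDerivAt_gTW_of_half_lt (hr : 0 < r) {K : ℕ} (hK : K < r ^ (n - 1)) {x t : ℝ}
    (hx : (r : ℝ) ^ (n - 1) * x = K + t) (ht₁ : t < 1) (ht : 1 / 2 < t) :
    HasDerivAt (gTW r n) (-1) x := by
  have h := hasDerivAt_gTW hr hK (s := t - 1) (by rw [Nat.cast_succ, ← sub_sub, hx]; ring)
    (sub_neg.2 ht₁).ne (by rw [abs_of_neg (sub_neg.2 ht₁)]; linarith)
  rwa [sign_neg (sub_neg.2 ht₁), SignType.coe_neg, SignType.coe_one] at h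

end Grid

theorem stmt3 (r : ℕ) (hr : 2 ≤ r) (ε : ℕ → ℕ) (hε : ∀ n, ε n < r)
    (x : ℝ) (hxe : x = ∑' n : ℕ, (ε (n + 1) : ℝ) / (r : ℝ) ^ (n + 1))
    (h0 : ¬ ∃ n₀, ∀ n ≥ n₀, ε n = 0)
    (h1 : ¬ ∃ n₀, ∀ n ≥ n₀, ε n = r - 1)
    (h2 : ¬ ∃ n₀, ∀ n ≥ n₀, (ε n : ℝ) = ((r : ℝ) - 1) / 2) :
    ∀ n, 1 ≤ n → ∃ d : ℝ, HasDerivAt (gTW r n) d x ∧ (d = 1 ∨ d = -1) ∧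
      ((ε n : ℝ) < ((r : ℝ) - 1) / 2 → d = 1) ∧
      (((r : ℝ) - 1) / 2 < (ε n : ℝ) → d = -1) := by
  intro n hn
  set a : ℕ → Fin r := fun i => ⟨ε i, hε i⟩
  have hx : x = Real.ofDigits (fun i => a (i + 1)) := by
    simp only [hxe, Real.ofDigits, Real.ofDigitsTerm, div_eq_mul_inv, a]
  push Not at h0 h1
  have tail_pos (p : ℕ) : 0 < Real.ofDigits (fun i => a (i + p)) := by
    obtain ⟨j, hj, hj0⟩ := h0 p
    exact Real.ofDigits_pos (i := j - p) (by rwa [Nat.sub_add_cancel hj])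
  have tail_lt_one (p : ℕ) : Real.ofDigits (fun i => a (i + p)) < 1 := by
    obtain ⟨j, hj, hj1⟩ := h1 p
    exact Real.ofDigits_lt_one hr (i := j - p) (by rwa [Nat.sub_add_cancel hj])
  obtain ⟨K, hK, hKx⟩ := Real.exists_pow_mul_ofDigits_shift_eq a hn
  rw [← hx] at hKx
  set t := Real.ofDigits (fun i => a (i + n))
  have ht : t ≠ 1 / 2 := fun ht => h2 ⟨n, fun i hi => by
    have h : 2 * (ε i : ℝ) + 1 = r := by
      exact_mod_cast Real.two_mul_digit_add_one_eq_of_ofDigits_shift_eq_half tail_pos tail_lt_one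
        ht hi
    linarith⟩
  have hr₀ : 0 < r := by omega
  rcases ht.lt_or_gt with ht | ht
  · exact ⟨1, hasDerivAt_gTW_of_lt_half hr₀ hK.le hKx (tail_pos _) ht, Or.inl rfl, fun _ => rfl,
      fun hεn => absurd (Real.half_lt_ofDigits_shift (tail_pos _) hεn) ht.not_gt⟩
  · exact ⟨-1, hasDerivAt_gTW_of_half_lt hr₀ hK hKx (tail_lt_one _) ht, Or.inr rfl,
      fun hεn => absurd (Real.ofDigits_shift_lt_half (tail_lt_one _) hεn) ht.not_gt, fun _ => rfl⟩
end

section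
/- The sets A⁺ = { x ∈ [0,1] : Σ_{n=1}^∞ g'_n(x) = +∞ } and A⁻ = { x ∈ [0,1] : Σ_{n=1}^∞ g'_n(x) = -∞ } both have Lebesgue measure zero. -/
open Set Filter MeasureTheory Metric Topology

/-!
On `(0, 1)` we have `g_n(x) = φ(r^(n-1) x) / r^(n-1)`, where `φ` is the distance to `ℤ`, so the
partial sums `∑_{n ≤ N} g_n'(x)` are the Birkhoff sums `∑_{k < N} φ'(r^k x)` of the map
`x ↦ r x`. The set where they tend to `+∞` is `1`-periodic and invariant under `x ↦ r x`, hence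
null or conull by ergodicity of multiplication by `r` on `ℝ / ℤ`. As `φ'` is odd, the reflection
`x ↦ -x` maps it onto the set where the sums tend to `-∞`. Reflection preserves Lebesgue measure
and two disjoint sets cannot both be conull, so both sets are null.
-/

lemma AddCircle.measure_preimage_coe_eq_zero {T : ℝ} [Fact (0 < T)] {U : Set (AddCircle T)}
    (hU : MeasurableSet U) (h : volume U = 0) : volume (((↑) : ℝ → AddCircle T) ⁻¹' U) = 0 := by
  rw [← inter_univ (_ ⁻¹' U), ← iUnion_Ioc_add_zsmul (Fact.out : 0 < T) 0, inter_iUnion]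
  refine measure_iUnion_null fun n => ?_
  rw [add_zsmul, one_zsmul, ← add_assoc, ← AddCircle.add_projection_respects_measure _ _ hU, h]

theorem measure_eq_zero_or_compl_of_periodic_of_mul_invariant {T : ℝ} (hT : 0 < T) {r : ℕ}
    (hr : 1 < r) {G : Set ℝ} (hG : MeasurableSet G) (hper : ∀ x, x + T ∈ G ↔ x ∈ G)
    (hmul : ∀ x, (r : ℝ) * x ∈ G ↔ x ∈ G) : volume G = 0 ∨ volume Gᶜ = 0 := by
  have := Fact.mk hT
  have hperiodic : Function.Periodic (· ∈ G) T := fun x => propext (hper x)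
  set E : Set (AddCircle T) := {z | hperiodic.lift z}
  have hpre : ((↑) : ℝ → AddCircle T) ⁻¹' E = G := rfl
  have hE : MeasurableSet E := measurableSet_quotient.2 hG
  have hinv : (fun z : AddCircle T => r • z) ⁻¹' E = E := by
    ext z
    induction z using QuotientAddGroup.induction_on with
    | H x =>
      change r • (x : AddCircle T) ∈ E ↔ (x : AddCircle T) ∈ E
      rw [← AddCircle.coe_nsmul, nsmul_eq_mul]
      exact hmul x
  rcases (AddCircle.ergodic_nsmul hr).measure_self_or_compl_eq_zero hE hinv with h | h
  · exact .inl (hpre ▸ AddCircle.measure_preimage_coe_eq_zero hE h)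
  · exact .inr (hpre ▸ AddCircle.measure_preimage_coe_eq_zero hE.compl h)

section BirkhoffSum

variable {g : ℝ → ℝ} {r : ℕ}

lemma birkhoffSum_mul_left_apply (N : ℕ) (x : ℝ) :
    birkhoffSum ((r : ℝ) * ·) g N x = ∑ k ∈ Finset.range N, g ((r : ℝ) ^ k * x) := by
  simp only [birkhoffSum, mul_left_iterate_apply]

lemma birkhoffSum_mul_left_add_period {T : ℝ} (hg : Function.Periodic g T) (N : ℕ) (x : ℝ) :
    birkhoffSum ((r : ℝ) * ·) g N (x + T) = birkhoffSum ((r : ℝ) * ·) g N x := by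
  simp only [birkhoffSum_mul_left_apply, mul_add]
  refine Finset.sum_congr rfl fun k _ => ?_
  exact_mod_cast hg.nat_mul (r ^ k) _

lemma birkhoffSum_mul_left_neg (hg : ∀ x, g (-x) = -g x) (N : ℕ) (x : ℝ) :
    birkhoffSum ((r : ℝ) * ·) g N (-x) = -birkhoffSum ((r : ℝ) * ·) g N x := by
  simp only [birkhoffSum_mul_left_apply, mul_neg, hg, Finset.sum_neg_distrib]

lemma tendsto_birkhoffSum_mul_left_iff (x : ℝ) :
    Tendsto (birkhoffSum ((r : ℝ) * ·) g · ((r : ℝ) * x)) atTop atTop ↔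
      Tendsto (birkhoffSum ((r : ℝ) * ·) g · x) atTop atTop := by
  rw [← tendsto_add_atTop_iff_nat 1 (f := (birkhoffSum ((r : ℝ) * ·) g · x))]
  simp only [birkhoffSum_succ']
  exact ⟨tendsto_atTop_add_const_left _ _, fun h => by
    simpa using tendsto_atTop_add_const_left _ (-g x) h⟩

lemma neg_setOf_tendsto_birkhoffSum_mul_left (hg : ∀ x, g (-x) = -g x) :
    -{x | Tendsto (birkhoffSum ((r : ℝ) * ·) g · x) atTop atTop} =
      {x | Tendsto (birkhoffSum ((r : ℝ) * ·) g · x) atTop atBot} := by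
  ext x
  simp only [Set.mem_neg, mem_ofPred_eq, birkhoffSum_mul_left_neg hg, tendsto_neg_atTop_iff]

theorem measure_setOf_tendsto_birkhoffSum_mul_left_atTop {T : ℝ} (hT : 0 < T) (hr : 1 < r)
    (hmeas : Measurable g) (hper : Function.Periodic g T) (hodd : ∀ x, g (-x) = -g x) :
    volume {x | Tendsto (birkhoffSum ((r : ℝ) * ·) g · x) atTop atTop} = 0 := by
  set S := {x | Tendsto (birkhoffSum ((r : ℝ) * ·) g · x) atTop atTop}
  have hS : MeasurableSet S := measurableSet_tendsto _ fun N =>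
    Finset.measurable_sum _ fun k _ => hmeas.comp ((measurable_const_mul _).iterate k)
  refine (measure_eq_zero_or_compl_of_periodic_of_mul_invariant hT hr hS
    (fun x => by simp only [S, mem_ofPred_eq, birkhoffSum_mul_left_add_period hper])
    tendsto_birkhoffSum_mul_left_iff).resolve_right fun hfull => ?_
  have hneg : volume (-S)ᶜ = 0 := by rw [← Set.compl_neg, Measure.measure_neg, hfull]
  have hdisj : S ∩ -S = ∅ := by
    rw [neg_setOf_tendsto_birkhoffSum_mul_left hodd]
    exact eq_empty_of_forall_notMem fun x ⟨h₁, h₂⟩ => h₁.not_tendsto disjoint_atTop_atBot h₂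
  have := measure_union_null hfull hneg
  rw [← compl_inter, hdisj, compl_empty, Real.volume_univ] at this
  exact ENNReal.top_ne_zero this

theorem measure_setOf_tendsto_birkhoffSum_mul_left_atBot {T : ℝ} (hT : 0 < T) (hr : 1 < r)
    (hmeas : Measurable g) (hper : Function.Periodic g T) (hodd : ∀ x, g (-x) = -g x) :
    volume {x | Tendsto (birkhoffSum ((r : ℝ) * ·) g · x) atTop atBot} = 0 := by
  rw [← neg_setOf_tendsto_birkhoffSum_mul_left hodd, Measure.measure_neg]
  exact measure_setOf_tendsto_birkhoffSum_mul_left_atTop hT hr hmeas hper hodd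

end BirkhoffSum

lemma phiTW_eq_abs_sub_round (t : ℝ) : phiTW t = |t - round t| := by
  rw [phiTW]
  refine le_antisymm ?_ ((le_infDist (range_nonempty _)).2 ?_)
  · exact (infDist_le_dist_of_mem (mem_range_self (round t))).trans_eq (Real.dist_eq _ _)
  · rintro _ ⟨k, rfl⟩
    exact round_le t k

lemma phiTW_periodic : Function.Periodic phiTW 1 := fun t => by
  simp only [phiTW_eq_abs_sub_round, round_add_one, Int.cast_add, Int.cast_one,
    add_sub_add_right_eq_sub]

lemma phiTW_neg (t : ℝ) : phiTW (-t) = phiTW t := by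
  have : Neg.neg '' range (Int.cast : ℤ → ℝ) = range Int.cast := by
    ext x
    simp only [image_neg_eq_neg, Set.mem_neg, mem_range]
    exact ⟨fun ⟨k, hk⟩ => ⟨-k, by rw [Int.cast_neg, hk, neg_neg]⟩,
      fun ⟨k, hk⟩ => ⟨-k, by rw [Int.cast_neg, hk]⟩⟩
  rw [phiTW, ← this, infDist_image isometry_neg, phiTW]

lemma deriv_phiTW_periodic : Function.Periodic (deriv phiTW) 1 := fun t => by
  rw [← deriv_comp_add_const, phiTW_periodic.funext]

lemma deriv_phiTW_neg (t : ℝ) : deriv phiTW (-t) = -deriv phiTW t := by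
  have := deriv_comp_neg (f := phiTW) (x := t)
  simp only [phiTW_neg] at this
  rw [this, neg_neg]

lemma monotone_round {α : Type*} [Ring α] [LinearOrder α] [IsStrictOrderedRing α] [FloorRing α] :
    Monotone (round : α → ℤ) := fun a b hab => by
  simpa only [round_eq_div] using Int.ediv_le_ediv two_pos
    (add_le_add_left (Int.floor_mono (mul_le_mul_of_nonneg_left hab zero_le_two)) 1)

lemma gTW_eq_of_mem_Icc {r : ℕ} (hr : 0 < r) (n : ℕ) {y : ℝ} (hy : y ∈ Icc (0 : ℝ) 1) :
    gTW r n y = phiTW ((r : ℝ) ^ (n - 1) * y) / (r : ℝ) ^ (n - 1) := by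
  set M : ℕ := r ^ (n - 1)
  have hM : (r : ℝ) ^ (n - 1) = M := by simp [M]
  have hMpos : (0 : ℝ) < M := by simp [M, hr]
  have hdist : ∀ k : ℤ, dist y (k / M) = |M * y - k| / M := fun k => by
    rw [Real.dist_eq, ← abs_of_pos hMpos, ← abs_div, abs_of_pos hMpos]
    congr 1
    field_simp
  rw [gTW, DTW, hM]
  apply le_antisymm
  · -- the integer nearest to `M * y` lies in `[0, M]`, so it gives a point of `D_n`
    set k := round ((M : ℝ) * y)
    have hk0 : 0 ≤ k := round_zero (α := ℝ) ▸ monotone_round (by nlinarith [hy.1])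
    have hkM : k ≤ M := by
      simpa using monotone_round (by nlinarith [hy.2] : (M : ℝ) * y ≤ M)
    have hmem : (k : ℝ) / M ∈ {z : ℝ | ∃ k : ℤ, z = k / M} ∩ Icc 0 1 :=
      ⟨⟨k, rfl⟩, div_nonneg (by exact_mod_cast hk0) hMpos.le,
        div_le_one_of_le₀ (by exact_mod_cast hkM) hMpos.le⟩
    calc infDist y _ ≤ dist y (k / M) := infDist_le_dist_of_mem hmem
      _ = _ := by rw [hdist, phiTW_eq_abs_sub_round]
  · refine (le_infDist ⟨0, ?_⟩).2 ?_
    · exact ⟨⟨0, by simp⟩, left_mem_Icc.2 zero_le_one⟩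
    rintro _ ⟨⟨k, rfl⟩, -⟩
    rw [hdist]
    gcongr
    exact infDist_le_dist_of_mem (mem_range_self k)

lemma HasDerivAt.of_comp_mul_div {f : ℝ → ℝ} {c d x : ℝ} (hc : c ≠ 0)
    (h : HasDerivAt (fun y => f (c * y) / c) d x) : HasDerivAt f d (c * x) := by
  rw [← mul_div_cancel_left₀ x hc] at h
  refine (((h.comp (c * x) ((hasDerivAt_id _).div_const c)).const_mul c).congr_deriv
    (by field_simp)).congr_of_eventuallyEq (.of_forall fun t => ?_)
  simp [mul_div_cancel₀ _ hc]

lemma hasDerivAt_phiTW_of_hasDerivAt_gTW {r n : ℕ} (hr : 0 < r) {x d : ℝ}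
    (hx : x ∈ Ioo (0 : ℝ) 1) (h : HasDerivAt (gTW r n) d x) :
    HasDerivAt phiTW d ((r : ℝ) ^ (n - 1) * x) := by
  have hg : gTW r n =ᶠ[𝓝 x] fun y => phiTW ((r : ℝ) ^ (n - 1) * y) / (r : ℝ) ^ (n - 1) :=
    eventually_of_mem (isOpen_Ioo.mem_nhds hx) fun y hy =>
      gTW_eq_of_mem_Icc hr n (Ioo_subset_Icc_self hy)
  exact (h.congr_of_eventuallyEq hg.symm).of_comp_mul_div (by positivity)

lemma sum_Icc_eq_birkhoffSum_deriv_phiTW {r : ℕ} (hr : 0 < r) {x : ℝ} (hx : x ∈ Ioo (0 : ℝ) 1)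
    {s : ℕ → ℝ} (hs : ∀ n, 1 ≤ n → HasDerivAt (gTW r n) (s n) x) (N : ℕ) :
    ∑ k ∈ Finset.Icc 1 N, s k = birkhoffSum ((r : ℝ) * ·) (deriv phiTW) N x := by
  rw [birkhoffSum_mul_left_apply, ← Finset.Ico_add_one_right_eq_Icc, Finset.range_eq_Ico,
    ← Finset.sum_Ico_add' s 0 N 1]
  refine Finset.sum_congr rfl fun k _ => ?_
  have hk := hasDerivAt_phiTW_of_hasDerivAt_gTW hr hx (hs (k + 1) (Nat.le_add_left 1 k))
  simpa using hk.deriv.symm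

lemma setOf_hasDerivAt_gTW_tendsto_subset {r : ℕ} (hr : 0 < r) (l : Filter ℝ) :
    {x : ℝ | x ∈ Set.Icc (0:ℝ) 1 ∧ ∃ s : ℕ → ℝ,
      (∀ n, 1 ≤ n → HasDerivAt (gTW r n) (s n) x) ∧
      Tendsto (fun N => ∑ k ∈ Finset.Icc 1 N, s k) atTop l} ⊆
      {0, 1} ∪ {x | Tendsto (birkhoffSum ((r : ℝ) * ·) (deriv phiTW) · x) atTop l} := by
  rintro x ⟨hx, s, hs, hlim⟩
  by_cases hx' : x ∈ Ioo (0 : ℝ) 1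
  · right
    simpa only [mem_ofPred_eq, sum_Icc_eq_birkhoffSum_deriv_phiTW hr hx' hs] using hlim
  · left
    rw [← Icc_sdiff_Ioo_same zero_le_one]
    exact ⟨hx, hx'⟩

theorem stmt5 (r : ℕ) (hr : 2 ≤ r) :
    volume {x : ℝ | x ∈ Set.Icc (0:ℝ) 1 ∧ ∃ s : ℕ → ℝ,
      (∀ n, 1 ≤ n → HasDerivAt (gTW r n) (s n) x) ∧
      Tendsto (fun N => ∑ k ∈ Finset.Icc 1 N, s k) atTop atTop} = 0 ∧
    volume {x : ℝ | x ∈ Set.Icc (0:ℝ) 1 ∧ ∃ s : ℕ → ℝ,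
      (∀ n, 1 ≤ n → HasDerivAt (gTW r n) (s n) x) ∧
      Tendsto (fun N => ∑ k ∈ Finset.Icc 1 N, s k) atTop atBot} = 0 := by
  have hr0 : 0 < r := by omega
  have hpair : volume ({0, 1} : Set ℝ) = 0 := (toFinite _).measure_zero _
  constructor
  · refine measure_mono_null (setOf_hasDerivAt_gTW_tendsto_subset hr0 atTop)
      (measure_union_null hpair ?_)
    exact measure_setOf_tendsto_birkhoffSum_mul_left_atTop one_pos hr (measurable_deriv _)
      deriv_phiTW_periodic deriv_phiTW_neg
  · refine measure_mono_null (setOf_hasDerivAt_gTW_tendsto_subset hr0 atBot)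
      (measure_union_null hpair ?_)
    exact measure_setOf_tendsto_birkhoffSum_mul_left_atBot one_pos hr (measurable_deriv _)
      deriv_phiTW_periodic deriv_phiTW_neg
end

section
/- If r ≥ 3 is odd and x ∈ D̃ (the set of midpoints of consecutive r-adic points, i.e., points whose base-r expansion is eventually constant equal to (r-1)/2), then the right derivative of f_r at x is -∞ and the left derivative is +∞. -/
/-! For odd `r` and `x = (2k+1)/(2rᶜ)`, every `rᵐx` with `m ≥ c` is a half-integer, where
`φ = dist(·, ℤ)` attains its maximum `1/2` and falls off with slope `1` on both sides.
So for `|y - x| ≤ 1/(2r^(c+N))` the first `c` summands of `f_r` rise by at most `|y - x|`,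
the next `N + 1` each fall by exactly `|y - x|`, and the remaining ones cannot rise:
`f_r(y) - f_r(x) ≤ (c - (N + 1))|y - x|`. Letting `N → ∞` gives the infinite one-sided
derivatives. -/

open Set Filter MeasureTheory Metric Topology

lemma phiTW_nonneg (x : ℝ) : 0 ≤ phiTW x := infDist_nonneg

lemma phiTW_le_abs_sub_intCast (x : ℝ) (m : ℤ) : phiTW x ≤ |x - m| :=
  infDist_le_dist_of_mem ⟨m, rfl⟩

lemma phiTW_le_half (x : ℝ) : phiTW x ≤ 1 / 2 :=
  (phiTW_le_abs_sub_intCast x (round x)).trans (abs_sub_round x)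

lemma phiTW_sub_phiTW_le (x y : ℝ) : phiTW y - phiTW x ≤ |y - x| := by
  have := infDist_le_infDist_add_dist (s := range (Int.cast : ℤ → ℝ)) (x := y) (y := x)
  rw [Real.dist_eq] at this
  exact sub_le_iff_le_add'.2 this

lemma phiTW_intCast_add_half (j : ℤ) : phiTW (j + 1 / 2) = 1 / 2 := by
  refine le_antisymm (phiTW_le_half _) ((le_infDist (range_nonempty _)).2 ?_)
  rintro _ ⟨m, rfl⟩
  rw [Real.dist_eq, show (j : ℝ) + 1 / 2 - m = ((j - m : ℤ) : ℝ) + 1 / 2 by push_cast; ring]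
  rcases le_or_gt 0 (j - m) with h | h
  · have : (0 : ℝ) ≤ ((j - m : ℤ) : ℝ) := by exact_mod_cast h
    rw [abs_of_nonneg (by linarith)]
    linarith
  · have : ((j - m : ℤ) : ℝ) ≤ -1 := by exact_mod_cast (by omega : j - m ≤ -1)
    rw [abs_of_neg (by linarith)]
    linarith

lemma phiTW_intCast_add_half_add_le (j : ℤ) {t : ℝ} (ht : |t| ≤ 1 / 2) :
    phiTW (j + 1 / 2 + t) ≤ 1 / 2 - |t| := by
  rcases le_or_gt 0 t with h | h
  · have := phiTW_le_abs_sub_intCast (j + 1 / 2 + t) (j + 1)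
    rw [abs_of_nonneg h] at ht ⊢
    rwa [Int.cast_add, Int.cast_one, show (j : ℝ) + 1 / 2 + t - (j + 1) = -(1 / 2 - t) by ring,
      abs_neg, abs_of_nonneg (by linarith)] at this
  · have := phiTW_le_abs_sub_intCast (j + 1 / 2 + t) j
    rw [abs_of_neg h] at ht ⊢
    rwa [show (j : ℝ) + 1 / 2 + t - j = 1 / 2 - -t by ring, abs_of_nonneg (by linarith)] at this

noncomputable def twTerm (b : ℝ) (n : ℕ) (x : ℝ) : ℝ := 1 / b ^ n * phiTW (b ^ n * x)

lemma fTW_eq_tsum_twTerm (r : ℕ) (x : ℝ) : fTW r x = ∑' n, twTerm r n x := rfl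

lemma summable_twTerm {b : ℝ} (hb : 1 < b) (x : ℝ) : Summable fun n => twTerm b n x := by
  refine .of_nonneg_of_le (fun n => mul_nonneg (by positivity) (phiTW_nonneg _)) (fun n => ?_)
    ((summable_geometric_of_lt_one (by positivity) ((div_lt_one (by linarith)).2 hb)).mul_right
      (1 / 2))
  rw [twTerm, div_pow, one_pow]
  exact mul_le_mul_of_nonneg_left (phiTW_le_half _) (by positivity)

section

variable {b : ℝ} {n : ℕ} {x y : ℝ}

lemma twTerm_sub_twTerm_le (hb : 0 < b) : twTerm b n y - twTerm b n x ≤ |y - x| := by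
  have hbn : 0 < b ^ n := pow_pos hb n
  calc twTerm b n y - twTerm b n x = 1 / b ^ n * (phiTW (b ^ n * y) - phiTW (b ^ n * x)) := by
        rw [twTerm, twTerm, mul_sub]
    _ ≤ 1 / b ^ n * |b ^ n * y - b ^ n * x| :=
        mul_le_mul_of_nonneg_left (phiTW_sub_phiTW_le _ _) (by positivity)
    _ = |y - x| := by rw [← mul_sub, abs_mul, abs_of_pos hbn]; field_simp

lemma twTerm_sub_twTerm_nonpos_of_half (hb : 0 < b) (j : ℤ) (hx : b ^ n * x = j + 1 / 2) :
    twTerm b n y - twTerm b n x ≤ 0 := by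
  rw [sub_nonpos, twTerm, twTerm, hx, phiTW_intCast_add_half]
  exact mul_le_mul_of_nonneg_left (phiTW_le_half _) (by positivity)

lemma twTerm_sub_twTerm_le_neg_of_half (hb : 0 < b) (j : ℤ) (hx : b ^ n * x = j + 1 / 2)
    (hyx : b ^ n * |y - x| ≤ 1 / 2) : twTerm b n y - twTerm b n x ≤ -|y - x| := by
  have hbn : 0 < b ^ n := pow_pos hb n
  have ht : |b ^ n * (y - x)| = b ^ n * |y - x| := by rw [abs_mul, abs_of_pos hbn]
  have hy : b ^ n * y = j + 1 / 2 + b ^ n * (y - x) := by rw [← hx]; ring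
  have := phiTW_intCast_add_half_add_le j (ht ▸ hyx)
  rw [← hy, ht] at this
  calc twTerm b n y - twTerm b n x
        ≤ 1 / b ^ n * (1 / 2 - b ^ n * |y - x|) - 1 / b ^ n * (1 / 2) := by
        rw [twTerm, twTerm, hx, phiTW_intCast_add_half]
        gcongr
    _ = -|y - x| := by field_simp; ring

lemma pow_mul_odd_div_two_pow_eq_add_half {r : ℕ} (hr : Odd r) (k : ℤ) {c m : ℕ}
    (hcm : c ≤ m) :
    ∃ j : ℤ, (r : ℝ) ^ m * ((2 * k + 1) / (2 * (r : ℝ) ^ c)) = j + 1 / 2 := by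
  obtain ⟨p, rfl⟩ := Nat.exists_eq_add_of_le hcm
  obtain ⟨j, hj⟩ : Odd ((r : ℤ) ^ p * (2 * k + 1)) := hr.pow.natCast.mul (odd_two_mul_add_one k)
  refine ⟨j, ?_⟩
  have hr0 : (r : ℝ) ≠ 0 := by exact_mod_cast hr.pos.ne'
  have hj' : (r : ℝ) ^ p * (2 * k + 1) = 2 * j + 1 := by exact_mod_cast hj
  rw [pow_add]
  field_simp
  linear_combination hj'

variable {r : ℕ}

lemma exists_eq_odd_div_two_pow_of_mem_DtTWall (hx : x ∈ DtTWall r) :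
    ∃ (c : ℕ) (k : ℤ), x = (2 * k + 1) / (2 * (r : ℝ) ^ c) := by
  simp only [DtTWall, mem_iUnion] at hx
  obtain ⟨n, -, ⟨k, hk⟩, -⟩ := hx
  exact ⟨n - 1, k, hk⟩

lemma fTW_sub_fTW_le (hr : 1 < r) (hodd : Odd r) (c N : ℕ) (k : ℤ)
    (hx : x = (2 * k + 1) / (2 * (r : ℝ) ^ c)) (hyx : |y - x| ≤ 1 / (2 * (r : ℝ) ^ (c + N))) :
    fTW r y - fTW r x ≤ (c - (N + 1)) * |y - x| := by
  have hr' : (1 : ℝ) < r := by exact_mod_cast hr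
  have hr0 : (0 : ℝ) < r := by linarith
  have half (m : ℕ) (hm : c ≤ m) : ∃ j : ℤ, (r : ℝ) ^ m * x = j + 1 / 2 :=
    hx ▸ pow_mul_odd_div_two_pow_eq_add_half hodd k hm
  set d : ℕ → ℝ := fun m => twTerm r m y - twTerm r m x
  have hd : Summable d := (summable_twTerm hr' y).sub (summable_twTerm hr' x)
  have head : ∑ m ∈ Finset.range c, d m ≤ c * |y - x| := by
    simpa using Finset.sum_le_card_nsmul (Finset.range c) d _ fun m _ => twTerm_sub_twTerm_le hr0
  have middle : ∑ m ∈ Finset.Ico c (c + N + 1), d m ≤ (N + 1) * -|y - x| := by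
    have := Finset.sum_le_card_nsmul (Finset.Ico c (c + N + 1)) d _ fun m hm => by
      obtain ⟨hcm, hmN⟩ := Finset.mem_Ico.1 hm
      obtain ⟨j, hj⟩ := half m hcm
      refine twTerm_sub_twTerm_le_neg_of_half hr0 j hj ?_
      calc (r : ℝ) ^ m * |y - x| ≤ (r : ℝ) ^ (c + N) * (1 / (2 * (r : ℝ) ^ (c + N))) := by
            gcongr
            · exact hr'.le
            · omega
        _ = 1 / 2 := by field_simp
    simpa [Nat.card_Ico, show c + N + 1 - c = N + 1 by omega] using this
  have tail : ∑' m, d (m + (c + N + 1)) ≤ 0 := tsum_nonpos fun m => by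
    obtain ⟨j, hj⟩ := half (m + (c + N + 1)) (by omega)
    exact twTerm_sub_twTerm_nonpos_of_half hr0 j hj
  rw [fTW_eq_tsum_twTerm, fTW_eq_tsum_twTerm, ← (summable_twTerm hr' y).tsum_sub
    (summable_twTerm hr' x), ← hd.sum_add_tsum_nat_add (c + N + 1),
    ← Finset.sum_range_add_sum_Ico _ (by omega : c ≤ c + N + 1)]
  linarith

end

theorem stmt8 (r : ℕ) (hr : 3 ≤ r) (hodd : Odd r) (x : ℝ) (hx : x ∈ DtTWall r) :
    Tendsto (fun h : ℝ => (fTW r (x + h) - fTW r x) / h) (𝓝[>] 0) atBot ∧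
    Tendsto (fun h : ℝ => (fTW r (x - h) - fTW r x) / (-h)) (𝓝[>] 0) atTop := by
  obtain ⟨c, k, hxk⟩ := exists_eq_odd_div_two_pow_of_mem_DtTWall hx
  have hr1 : 1 < r := by omega
  have small (N : ℕ) : ∀ᶠ h in 𝓝[>] (0 : ℝ), h ∈ Ioo 0 (1 / (2 * (r : ℝ) ^ (c + N))) :=
    Ioo_mem_nhdsGT (by positivity)
  constructor
  · refine tendsto_atBot.2 fun C => ?_
    obtain ⟨N, hN⟩ := exists_nat_ge ((c : ℝ) - C)
    filter_upwards [small N] with h ⟨h0, hh⟩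
    have := fTW_sub_fTW_le (y := x + h) hr1 hodd c N k hxk (by simpa [abs_of_pos h0] using hh.le)
    rw [add_sub_cancel_left, abs_of_pos h0] at this
    rw [div_le_iff₀ h0]
    nlinarith
  · refine tendsto_atTop.2 fun C => ?_
    obtain ⟨N, hN⟩ := exists_nat_ge (C + c)
    filter_upwards [small N] with h ⟨h0, hh⟩
    have := fTW_sub_fTW_le (y := x - h) hr1 hodd c N k hxk (by simpa [abs_of_pos h0] using hh.le)
    rw [sub_sub_cancel_left, abs_neg, abs_of_pos h0] at this
    rw [le_div_iff_of_neg (neg_neg_of_pos h0)]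
    nlinarith
end

section
/- The four sets { x : f_r'⁺(x) = +∞ }, { x : f_r'⁻(x) = +∞ }, { x : f_r'⁺(x) = -∞ }, and { x : f_r'⁻(x) = -∞ } are Lebesgue null sets in [0,1]. -/
open Set Filter MeasureTheory Metric Topology

/-
If the right difference quotients of `f` at `x` tend to `+∞`, then `f x ≤ f (x + t)` for all
`0 < t ≤ 1/(n+1)` for some `n`, and `f` is monotone on the set of such points in any interval of
length `1/(n+1)`. A function monotone on a set `s` is differentiable within `s` at almost every
point of `s` (Lebesgue), and at a point of `s` which is not isolated from the right in `s` this
finite derivative is incompatible with an infinite right derivative. Right-isolated points of `s`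
are countable. Hence the set where the right derivative is `+∞` is null, for every `f : ℝ → ℝ`;
the other three cases follow by passing to `-f` and `f (-·)`.
-/

theorem not_tendsto_rightDiffQuot_atTop {f : ℝ → ℝ} {s : Set ℝ} {x : ℝ}
    (hd : DifferentiableWithinAt ℝ f s x) (hx : (𝓝[s ∩ Ioi x] x).NeBot) :
    ¬ Tendsto (fun h : ℝ => (f (x + h) - f x) / h) (𝓝[>] 0) atTop := by
  intro htop
  have hslope : Tendsto (slope f x) (𝓝[s ∩ Ioi x] x) (𝓝 (derivWithin f s x)) :=
    (hasDerivWithinAt_iff_tendsto_slope.1 hd.hasDerivWithinAt).mono_left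
      (nhdsWithin_mono _ fun y hy => ⟨hy.1, hy.2.ne'⟩)
  have hshift : Tendsto (fun y => y - x) (𝓝[s ∩ Ioi x] x) (𝓝[>] 0) :=
    tendsto_nhdsWithin_of_tendsto_nhds_of_eventually_within _
      (tendsto_nhdsWithin_of_tendsto_nhds (by simpa using (continuous_sub_right x).tendsto x))
      (eventually_nhdsWithin_of_forall fun y hy => mem_Ioi.2 (sub_pos.2 hy.2))
  refine not_tendsto_atTop_of_tendsto_nhds hslope ((htop.comp hshift).congr fun y => ?_)
  simp [slope_def_field]

theorem MonotoneOn.volume_setOf_tendsto_rightDiffQuot_atTop {f : ℝ → ℝ} {s : Set ℝ}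
    (hf : MonotoneOn f s) :
    volume {x | x ∈ s ∧ Tendsto (fun h : ℝ => (f (x + h) - f x) / h) (𝓝[>] 0) atTop} = 0 := by
  refine measure_mono_null (fun x ⟨hxs, htop⟩ => ?_)
    (measure_union_null (ae_iff.1 hf.ae_differentiableWithinAt_of_mem)
      ((countable_setOfPred_isolated_right_within (s := s)).measure_zero volume))
  by_contra hx
  simp only [mem_union, mem_ofPred_eq, not_or, not_not, not_and] at hx
  exact not_tendsto_rightDiffQuot_atTop (hx.1 hxs) ⟨hx.2 hxs⟩ htop

theorem monotoneOn_setOf_forall_le_add_inter_Icc (f : ℝ → ℝ) {c : ℝ} (a : ℝ) :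
    MonotoneOn f ({x | ∀ t ∈ Ioc 0 c, f x ≤ f (x + t)} ∩ Icc a (a + c)) := by
  intro x hx z hz hxz
  rcases hxz.eq_or_lt with rfl | hlt
  · exact le_rfl
  · simpa using hx.1 (z - x) ⟨sub_pos.2 hlt, by linarith [hx.2.1, hz.2.2]⟩

theorem volume_setOf_tendsto_rightDiffQuot_atTop (f : ℝ → ℝ) :
    volume {x | Tendsto (fun h : ℝ => (f (x + h) - f x) / h) (𝓝[>] 0) atTop} = 0 := by
  let c : ℕ → ℝ := fun n => 1 / ((n : ℝ) + 1)
  have hc : ∀ n, 0 < c n := fun n => by positivity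
  refine measure_mono_null (fun x hx => ?_)
    (measure_iUnion_null fun n : ℕ => measure_iUnion_null fun k : ℤ =>
      MonotoneOn.volume_setOf_tendsto_rightDiffQuot_atTop
        (monotoneOn_setOf_forall_le_add_inter_Icc f (c := c n) (k * c n)))
  obtain ⟨u, hu, hsub⟩ :=
    mem_nhdsGT_iff_exists_Ioo_subset.1 (hx.eventually (eventually_ge_atTop 0))
  obtain ⟨n, hn⟩ := exists_nat_one_div_lt (mem_Ioi.1 hu)
  refine mem_iUnion.2 ⟨n, mem_iUnion.2 ⟨⌊x / c n⌋, ⟨⟨fun t ht => ?_, ?_, ?_⟩, hx⟩⟩⟩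
  · have hq : 0 ≤ (f (x + t) - f x) / t := hsub ⟨ht.1, ht.2.trans_lt hn⟩
    linarith [(le_div_iff₀ ht.1).1 hq]
  · exact (le_div_iff₀ (hc n)).1 (Int.floor_le _)
  · linarith [(div_lt_iff₀ (hc n)).1 (Int.lt_floor_add_one (x / c n))]

theorem volume_setOf_tendsto_rightDiffQuot_atBot (f : ℝ → ℝ) :
    volume {x | Tendsto (fun h : ℝ => (f (x + h) - f x) / h) (𝓝[>] 0) atBot} = 0 := by
  refine measure_mono_null (fun x hx => ?_) (volume_setOf_tendsto_rightDiffQuot_atTop (-f))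
  refine (tendsto_neg_atTop_iff.2 hx).congr fun h => ?_
  simp only [Pi.neg_apply]
  ring

theorem volume_setOf_tendsto_leftDiffQuot_atTop (f : ℝ → ℝ) :
    volume {x | Tendsto (fun h : ℝ => (f (x - h) - f x) / (-h)) (𝓝[>] 0) atTop} = 0 := by
  rw [← Measure.measure_neg]
  refine measure_mono_null (fun x hx => ?_)
    (volume_setOf_tendsto_rightDiffQuot_atBot fun y => f (-y))
  refine (tendsto_neg_atBot_iff.2 hx).congr fun h => ?_
  simp only [neg_neg, neg_add', div_neg]

theorem volume_setOf_tendsto_leftDiffQuot_atBot (f : ℝ → ℝ) :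
    volume {x | Tendsto (fun h : ℝ => (f (x - h) - f x) / (-h)) (𝓝[>] 0) atBot} = 0 := by
  rw [← Measure.measure_neg]
  refine measure_mono_null (fun x hx => ?_)
    (volume_setOf_tendsto_rightDiffQuot_atTop fun y => f (-y))
  refine (tendsto_neg_atTop_iff.2 hx).congr fun h => ?_
  simp only [neg_neg, neg_add', div_neg]

theorem stmt14_general (r : ℕ) :
    volume {x : ℝ | x ∈ Set.Icc (0:ℝ) 1 ∧
      Tendsto (fun h : ℝ => (fTW r (x + h) - fTW r x) / h) (𝓝[>] 0) atTop} = 0 ∧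
    volume {x : ℝ | x ∈ Set.Icc (0:ℝ) 1 ∧
      Tendsto (fun h : ℝ => (fTW r (x - h) - fTW r x) / (-h)) (𝓝[>] 0) atTop} = 0 ∧
    volume {x : ℝ | x ∈ Set.Icc (0:ℝ) 1 ∧
      Tendsto (fun h : ℝ => (fTW r (x + h) - fTW r x) / h) (𝓝[>] 0) atBot} = 0 ∧
    volume {x : ℝ | x ∈ Set.Icc (0:ℝ) 1 ∧
      Tendsto (fun h : ℝ => (fTW r (x - h) - fTW r x) / (-h)) (𝓝[>] 0) atBot} = 0 :=
  ⟨measure_mono_null (fun _ hx => hx.2) (volume_setOf_tendsto_rightDiffQuot_atTop (fTW r)),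
    measure_mono_null (fun _ hx => hx.2) (volume_setOf_tendsto_leftDiffQuot_atTop (fTW r)),
    measure_mono_null (fun _ hx => hx.2) (volume_setOf_tendsto_rightDiffQuot_atBot (fTW r)),
    measure_mono_null (fun _ hx => hx.2) (volume_setOf_tendsto_leftDiffQuot_atBot (fTW r))⟩

theorem stmt14 (r : ℕ) (hr : 2 ≤ r) :
    volume {x : ℝ | x ∈ Set.Icc (0:ℝ) 1 ∧
      Tendsto (fun h : ℝ => (fTW r (x + h) - fTW r x) / h) (𝓝[>] 0) atTop} = 0 ∧
    volume {x : ℝ | x ∈ Set.Icc (0:ℝ) 1 ∧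
      Tendsto (fun h : ℝ => (fTW r (x - h) - fTW r x) / (-h)) (𝓝[>] 0) atTop} = 0 ∧
    volume {x : ℝ | x ∈ Set.Icc (0:ℝ) 1 ∧
      Tendsto (fun h : ℝ => (fTW r (x + h) - fTW r x) / h) (𝓝[>] 0) atBot} = 0 ∧
    volume {x : ℝ | x ∈ Set.Icc (0:ℝ) 1 ∧
      Tendsto (fun h : ℝ => (fTW r (x - h) - fTW r x) / (-h)) (𝓝[>] 0) atBot} = 0 :=
  stmt14_general r
end

section
/- For every real r > 1 and every real ℓ ≥ 2, there exists x₀ ∈ (0, ℓ) such that r^{-x₀}(ℓ - x₀) + x₀ < log_r ℓ + 3. -/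
/-! If `logb r l < l`, take `x₀ = logb r l`: then `r ^ (-x₀) = 1 / l`, so the first term is
below `1`. Otherwise `l ≤ logb r l`, and every `x₀ ∈ [0, l]` gives a value at most `l`. -/
open Set Filter MeasureTheory Metric Topology

namespace Real

lemma rpow_neg_mul_sub_add_le {r x l : ℝ} (hr : 1 ≤ r) (hx : 0 ≤ x) (hxl : x ≤ l) :
    r ^ (-x) * (l - x) + x ≤ l := by
  have hpow : r ^ (-x) ≤ 1 := rpow_le_one_of_one_le_of_nonpos hr (neg_nonpos.mpr hx)
  nlinarith [rpow_nonneg (zero_le_one.trans hr) (-x)]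

lemma rpow_neg_logb_mul_sub_logb_lt_one {r l : ℝ} (hr₀ : 0 < r) (hr₁ : r ≠ 1) (hl : 0 < l)
    (hlogb : 0 < logb r l) : r ^ (-logb r l) * (l - logb r l) < 1 := by
  rw [rpow_neg hr₀.le, rpow_logb hr₀ hr₁ hl, inv_mul_lt_iff₀ hl]
  linarith

end Real

theorem stmt16 (r : ℝ) (hr : 1 < r) (l : ℝ) (hl : 2 ≤ l) :
    ∃ x₀ ∈ Set.Ioo (0:ℝ) l, r ^ (-x₀) * (l - x₀) + x₀ < Real.logb r l + 3 := by
  have hl₀ : (0 : ℝ) < l := by linarith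
  have hlogb : 0 < Real.logb r l := Real.logb_pos hr (by linarith)
  rcases lt_or_ge (Real.logb r l) l with hlt | hle
  · refine ⟨Real.logb r l, ⟨hlogb, hlt⟩, ?_⟩
    linarith [Real.rpow_neg_logb_mul_sub_logb_lt_one (zero_lt_one.trans hr) hr.ne' hl₀ hlogb]
  · refine ⟨l / 2, ⟨by linarith, by linarith⟩, ?_⟩
    linarith [Real.rpow_neg_mul_sub_add_le (x := l / 2) (l := l) hr.le (by linarith) (by linarith)]
end
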